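/- arXiv:1909.02539 — 2 statements merged into one kernel-verified Lean document; each statement's English description precedes it below -/
import Mathlib

section
/- If A ∈ R^{N×N} is symmetric positive definite and Q ∈ R^{N×k} has orthonormal columns, then every eigenvalue of the matrix (Q^T A^{-1} Q)(Q^T A Q) is greater than or equal to 1. -/
/-!
Put `B = QᵀAQ`, `C = QᵀA⁻¹Q` and `w = Bv`; the eigen-equation gives
`⟨w, Cw⟩ = μ ⟨v, Bv⟩`. Since `QᵀQ = 1`, `⟨v, Bv⟩ = ⟨Qv, Qw⟩`, and the Cauchy–Schwarz inequality
`⟨x, z⟩² ≤ ⟨x, Ax⟩ ⟨z, A⁻¹z⟩` bounds its square by `⟨v, Bv⟩ ⟨w, Cw⟩`.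
Hence `⟨v, Bv⟩ ≤ μ ⟨v, Bv⟩` with `⟨v, Bv⟩ > 0`.
-/

open Matrix

namespace Matrix

variable {n m R : Type*} [Fintype n] [Fintype m] [CommSemiring R]

theorem dotProduct_transpose_mul_mul_mulVec (Q : Matrix n m R) (M : Matrix n n R) (x y : m → R) :
    x ⬝ᵥ (Qᵀ * M * Q) *ᵥ y = (Q *ᵥ x) ⬝ᵥ M *ᵥ (Q *ᵥ y) := by
  rw [← mulVec_mulVec, ← mulVec_mulVec, dotProduct_transpose_mulVec, dotProduct_comm]

theorem mulVec_dotProduct_mulVec_of_transpose_mul_self_eq_one [DecidableEq m]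
    {Q : Matrix n m R} (hQ : Qᵀ * Q = 1) (x y : m → R) :
    (Q *ᵥ x) ⬝ᵥ (Q *ᵥ y) = x ⬝ᵥ y := by
  rw [← dotProduct_transpose_mulVec, mulVec_mulVec, hQ, one_mulVec, dotProduct_comm]

theorem mulVec_injective_of_transpose_mul_self_eq_one [DecidableEq m]
    {Q : Matrix n m R} (hQ : Qᵀ * Q = 1) : Function.Injective Q.mulVec :=
  Function.LeftInverse.injective (g := Qᵀ.mulVec) fun x => by rw [mulVec_mulVec, hQ, one_mulVec]

theorem PosDef.sq_dotProduct_le [DecidableEq n] {A : Matrix n n ℝ} (hA : A.PosDef)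
    (x z : n → ℝ) :
    (x ⬝ᵥ z) ^ 2 ≤ (x ⬝ᵥ A *ᵥ x) * (z ⬝ᵥ A⁻¹ *ᵥ z) := by
  set y := A⁻¹ *ᵥ z
  have hAy : A *ᵥ y = z := by
    rw [mulVec_mulVec, mul_nonsing_inv A ((isUnit_iff_isUnit_det A).1 hA.isUnit), one_mulVec]
  -- the `A`-quadratic form evaluated at `x + t • A⁻¹ z`
  have hquad : ∀ t : ℝ,
      0 ≤ (z ⬝ᵥ y) * (t * t) + 2 * (x ⬝ᵥ z) * t + x ⬝ᵥ A *ᵥ x := fun t => by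
    have := hA.posSemidef.dotProduct_mulVec_nonneg (x + t • y)
    have hyx : y ⬝ᵥ A *ᵥ x = x ⬝ᵥ z := by
      rw [← hA.isHermitian.eq, conjTranspose_eq_transpose_of_trivial,
        dotProduct_transpose_mulVec, hAy]
    simp only [star_trivial, add_dotProduct, dotProduct_add, mulVec_add, mulVec_smul,
      smul_dotProduct, dotProduct_smul, smul_eq_mul, hAy, hyx] at this
    rw [dotProduct_comm y z] at this
    linarith
  have := discrim_le_zero hquad
  rw [discrim] at this
  linarith

theorem PosDef.dotProduct_compression_mulVec_le [DecidableEq n] [DecidableEq m]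
    {A : Matrix n n ℝ} (hA : A.PosDef) {Q : Matrix n m ℝ} (hQ : Qᵀ * Q = 1) (v : m → ℝ) :
    v ⬝ᵥ (Qᵀ * A * Q) *ᵥ v ≤
      ((Qᵀ * A * Q) *ᵥ v) ⬝ᵥ (Qᵀ * A⁻¹ * Q) *ᵥ ((Qᵀ * A * Q) *ᵥ v) := by
  set w := (Qᵀ * A * Q) *ᵥ v
  rw [dotProduct_transpose_mul_mul_mulVec, dotProduct_transpose_mul_mul_mulVec]
  have hvw : (Q *ᵥ v) ⬝ᵥ (Q *ᵥ w) = (Q *ᵥ v) ⬝ᵥ A *ᵥ (Q *ᵥ v) := by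
    rw [mulVec_dotProduct_mulVec_of_transpose_mul_self_eq_one hQ,
      dotProduct_transpose_mul_mul_mulVec]
  have hcs := hA.sq_dotProduct_le (Q *ᵥ v) (Q *ᵥ w)
  rw [hvw] at hcs
  have ha := hA.posSemidef.dotProduct_mulVec_nonneg (Q *ᵥ v)
  have hc := hA.inv.posSemidef.dotProduct_mulVec_nonneg (Q *ᵥ w)
  simp only [star_trivial] at ha hc
  nlinarith

end Matrix

/-- Every (real) eigenvalue of `(Qᵀ A⁻¹ Q)(Qᵀ A Q)` is at least `1`, for `A`
symmetric positive definite and `Q` with orthonormal columns. -/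
theorem eigenvalues_reduced_preconditioned_ge_one
    (N k : ℕ)
    (A : Matrix (Fin N) (Fin N) ℝ) (hA : A.PosDef)
    (Q : Matrix (Fin N) (Fin k) ℝ) (hQ : Qᵀ * Q = 1)
    (μ : ℝ) (v : Fin k → ℝ) (hv : v ≠ 0)
    (heig : ((Qᵀ * A⁻¹ * Q) * (Qᵀ * A * Q)).mulVec v = μ • v) :
    1 ≤ μ := by
  have hQv : Q *ᵥ v ≠ 0 :=
    ((mulVec_injective_of_transpose_mul_self_eq_one hQ).ne_iff' (mulVec_zero Q)).2 hv
  have hBv_pos : 0 < v ⬝ᵥ (Qᵀ * A * Q) *ᵥ v := by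
    simpa only [dotProduct_transpose_mul_mul_mulVec, star_trivial]
      using hA.dotProduct_mulVec_pos hQv
  have hw_form : ((Qᵀ * A * Q) *ᵥ v) ⬝ᵥ (Qᵀ * A⁻¹ * Q) *ᵥ ((Qᵀ * A * Q) *ᵥ v) =
      μ * (v ⬝ᵥ (Qᵀ * A * Q) *ᵥ v) := by
    rw [mulVec_mulVec, heig, dotProduct_smul, smul_eq_mul, dotProduct_comm]
  have hle := hA.dotProduct_compression_mulVec_le hQ v
  rw [hw_form] at hle
  exact le_of_mul_le_mul_right (by simpa only [one_mul] using hle) hBv_pos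
end

section
/- If P^T V ∈ R^{(i−1)×(i−1)} is invertible and the new interpolation index p_i satisfies r_{p_i} ≠ 0 where r = v_i − V (P^T V)^{-1} P^T v_i, then the augmented matrix [P, e_{p_i}]^T [V, v_i] ∈ R^{i×i} is invertible. -/
/-!
Up to a permutation of rows and columns, `[P, e]ᵀ [V, v]` is the bordered matrix
`[[PᵀV, Pᵀv], [eᵀV, eᵀv]]`, so by the Schur complement formula its determinant is
`det (PᵀV) · eᵀ(v − V (PᵀV)⁻¹ Pᵀ v)`. For `e = e_{p_i}` the second factor is `r_{p_i}`.
-/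

open Matrix

namespace Matrix

variable {R n m l : Type*} [CommRing R] [Fintype n] [Fintype m] [DecidableEq m]
  [Fintype l] [DecidableEq l]

theorem det_transpose_fromCols_mul_fromCols (P V : Matrix n m R) (E W : Matrix n l R)
    (h : IsUnit (Pᵀ * V).det) :
    ((fromCols P E)ᵀ * fromCols V W).det
      = (Pᵀ * V).det * (Eᵀ * (W - V * (Pᵀ * V)⁻¹ * Pᵀ * W)).det := by
  have := (Pᵀ * V).invertibleOfIsUnitDet h
  rw [transpose_fromCols, fromRows_mul_fromCols, det_fromBlocks₁₁, invOf_eq_nonsing_inv]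
  simp only [Matrix.mul_sub, Matrix.mul_assoc]

theorem det_transpose_fromCols_mul_fromCols_replicateCol (P V : Matrix n m R) (e v : n → R)
    (h : IsUnit (Pᵀ * V).det) :
    ((fromCols P (replicateCol (Fin 1) e))ᵀ * fromCols V (replicateCol (Fin 1) v)).det
      = (Pᵀ * V).det * e ⬝ᵥ (v - V *ᵥ (Pᵀ * V)⁻¹ *ᵥ Pᵀ *ᵥ v) := by
  have hcol : replicateCol (Fin 1) v - V * (Pᵀ * V)⁻¹ * Pᵀ * replicateCol (Fin 1) v
      = replicateCol (Fin 1) (v - V *ᵥ (Pᵀ * V)⁻¹ *ᵥ Pᵀ *ᵥ v) := by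
    rw [mulVec_mulVec, mulVec_mulVec, ← replicateCol_mulVec]
    rfl
  rw [det_transpose_fromCols_mul_fromCols P V _ _ h, hcol, det_unique (n := Fin 1),
    transpose_replicateCol, replicateRow_mul_replicateCol_apply]

theorem of_dite_eq_fromCols_submatrix {α ι : Type*} {k : ℕ} (A : Matrix ι (Fin k) α)
    (b : ι → α) :
    (of fun i (j : Fin (k + 1)) => if h : (j : ℕ) < k then A i ⟨j, h⟩ else b i)
      = (fromCols A (replicateCol (Fin 1) b)).submatrix id finSumFinEquiv.symm := by
  ext i j
  induction j using Fin.lastCases with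
  | last => simp
  | cast j => simp

end Matrix

theorem deim_augmented_invertible_general
    (N m : ℕ)
    (P : Matrix (Fin N) (Fin m) ℝ)
    (V : Matrix (Fin N) (Fin m) ℝ)
    (hinv : IsUnit (Pᵀ * V).det)
    (v : Fin N → ℝ) (pi : Fin N)
    (hr : (v - V.mulVec ((Pᵀ * V)⁻¹.mulVec (Pᵀ.mulVec v))) pi ≠ 0)
    (V' : Matrix (Fin N) (Fin (m + 1)) ℝ)
    (hV' : V' = Matrix.of fun i (j : Fin (m + 1)) =>
      if h : (j : ℕ) < m then V i ⟨j, h⟩ else v i)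
    (P' : Matrix (Fin N) (Fin (m + 1)) ℝ)
    (hP' : P' = Matrix.of fun i (j : Fin (m + 1)) =>
      if h : (j : ℕ) < m then P i ⟨j, h⟩ else if i = pi then 1 else 0) :
    IsUnit (P'ᵀ * V').det := by
  have hP'_single : P' = Matrix.of fun i (j : Fin (m + 1)) =>
      if h : (j : ℕ) < m then P i ⟨j, h⟩ else (Pi.single pi 1 : Fin N → ℝ) i := by
    simp only [hP', Pi.single_apply]
  rw [hV', hP'_single, of_dite_eq_fromCols_submatrix, of_dite_eq_fromCols_submatrix,
    transpose_submatrix, ← submatrix_mul _ _ _ id _ Function.bijective_id,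
    det_submatrix_equiv_self, det_transpose_fromCols_mul_fromCols_replicateCol _ _ _ _ hinv, single_one_dotProduct]
  exact hinv.mul (isUnit_iff_ne_zero.mpr hr)

/-- If `PᵀV` is invertible and the new interpolation index `p_i` satisfies
`r_{p_i} ≠ 0`, where `r = v − V (PᵀV)⁻¹ Pᵀ v`, then the augmented matrix
`[P, e_{p_i}]ᵀ [V, v]` is invertible. -/
theorem deim_augmented_invertible
    (N m : ℕ)
    (p : Fin m → Fin N) (hp : Function.Injective p)
    (P : Matrix (Fin N) (Fin m) ℝ)
    (hP : P = Matrix.of fun i j => if i = p j then (1 : ℝ) else 0)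
    (V : Matrix (Fin N) (Fin m) ℝ)
    (hinv : IsUnit (Pᵀ * V).det)
    (v : Fin N → ℝ) (pi : Fin N)
    (hr : (v - V.mulVec ((Pᵀ * V)⁻¹.mulVec (Pᵀ.mulVec v))) pi ≠ 0)
    (V' : Matrix (Fin N) (Fin (m + 1)) ℝ)
    (hV' : V' = Matrix.of fun i (j : Fin (m + 1)) =>
      if h : (j : ℕ) < m then V i ⟨j, h⟩ else v i)
    (P' : Matrix (Fin N) (Fin (m + 1)) ℝ)
    (hP' : P' = Matrix.of fun i (j : Fin (m + 1)) =>
      if h : (j : ℕ) < m then P i ⟨j, h⟩ else if i = pi then 1 else 0) :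
    IsUnit (P'ᵀ * V').det :=
  deim_augmented_invertible_general N m P V hinv v pi hr V' hV' P' hP'
end
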